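/- (Convergence of GeoPG.) Let t ∈ (0, 1/β]. Let {x_k}_{k≥0} ⊆ ℝ^n, {c_k}_{k≥0} ⊆ ℝ^n and {R_k²}_{k≥0} ⊆ ℝ be sequences with c_0 = x_0^{++} and R_0² = (1 − αt)·‖G_t(x_0)‖²/α². Assume for every k ≥ 1: (a) F(x_k⁺) ≤ F(x_{k−1}⁺) − (t/2)·‖G_t(x_k)‖² and ‖x_k^{++} − c_{k−1}‖² ≥ ‖G_t(x_k)‖²/α²; (b) R_k² = (1 − √(αt))·R_{k−1}² and, for every δ ≥ 0, B(c_{k−1}, R_{k−1}² − (t/α)·‖G_t(x_k)‖² − δ) ∩ B(x_k^{++}, (1 − αt)·‖G_t(x_k)‖²/α² − δ) ⊆ B(c_k, R_k² − δ). Then for every k ≥ 0: x* ∈ B(c_k, R_k² − (2/α)·(F(x_k⁺) − F*)); consequently ‖x* − c_k‖² ≤ (1 − √(αt))^k · R_0² and F(x_{k+1}⁺) − F* ≤ (α/2)·(1 − √(αt))^k · R_0². -/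

import Mathlib

/-!
One proximal-gradient step from `x`, written `x⁺ = x - t • G`, satisfies for every `y`
`F y ≥ F x⁺ + ⟪G, y - x⟫ + t/2 ‖G‖² + α/2 ‖y - x‖²`: the descent lemma (this is where
`t ≤ 1/β` enters), strong convexity of `f` at `x`, and the variational inequality of the prox
add up to it. Completing the square turns it into
`y ∈ B(x^{++}, (1 - αt)‖G‖²/α² - (2/α)(F x⁺ - F y))`. With `y = x*` this is the second ball of
hypothesis (b); the sufficient decrease (a) shrinks the first one by `(t/α)‖G‖²`, so (b) with
`δ = (2/α)(F x⁺ₖ - F*) ≥ 0` carries the invariant from `k - 1` to `k`. The radii decrease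
geometrically, and the invariant bounds both `‖x* - cₖ‖²` and the optimality gap.
-/

open scoped RealInnerProductSpace

/-- The ball `B(c, r²) = {y : ‖y − c‖² ≤ r²}` (empty when `r² < 0`). -/
def B {n : ℕ} (c : EuclideanSpace ℝ (Fin n)) (r2 : ℝ) : Set (EuclideanSpace ℝ (Fin n)) :=
  {y | ‖y - c‖ ^ 2 ≤ r2}

open Set Filter Topology

variable {E : Type*} [NormedAddCommGroup E] [InnerProductSpace ℝ E]

theorem ConvexOn.le_sub_of_hasDerivAt_comp_add_smul {φ : E → ℝ} (hφ : ConvexOn ℝ univ φ)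
    {x v : E} {D : ℝ} (hD : HasDerivAt (fun s : ℝ => φ (x + s • v)) D 0) :
    D ≤ φ (x + v) - φ x := by
  have hline : ConvexOn ℝ univ (fun s : ℝ => φ (x + s • v)) := by
    simpa [Function.comp_def, AffineMap.lineMap_apply_module', add_comm] using
      hφ.comp_affineMap (AffineMap.lineMap x (x + v))
  simpa [slope_def_field] using hline.le_slope_of_hasDerivAt (mem_univ 0) (mem_univ 1) one_pos hD

theorem StrongConvexOn.add_sq_le_of_isMinOn {g : E → ℝ} {m : ℝ} (hg : StrongConvexOn univ m g)
    {p : E} (hp : IsMinOn g univ p) (y : E) : g p + m / 2 * ‖y - p‖ ^ 2 ≤ g y := by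
  have hlim : Tendsto (fun s : ℝ => (1 - s) * (m / 2 * ‖p - y‖ ^ 2)) (𝓝[>] 0)
      (𝓝 (m / 2 * ‖p - y‖ ^ 2)) := by
    have hcont : Continuous fun s : ℝ => (1 - s) * (m / 2 * ‖p - y‖ ^ 2) := by fun_prop
    simpa using (hcont.tendsto 0).mono_left nhdsWithin_le_nhds
  rw [norm_sub_rev, ← le_sub_iff_add_le']
  refine le_of_tendsto hlim ?_
  filter_upwards [Ioo_mem_nhdsGT one_pos] with s ⟨hs0, hs1⟩
  have hcomb := hg.2 (mem_univ p) (mem_univ y) (sub_nonneg.2 hs1.le) hs0.le (by ring)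
  have hmin := hp (mem_univ ((1 - s) • p + s • y))
  simp only [smul_eq_mul, mem_ofPred_eq] at hcomb hmin
  nlinarith

theorem ConvexOn.strongConvexOn_prox {h : E → ℝ} (hh : ConvexOn ℝ univ h) {t : ℝ} (ht : 0 ≤ t)
    (v : E) : StrongConvexOn univ 1 (fun u => t * h u + ‖u - v‖ ^ 2 / 2) := by
  rw [strongConvexOn_iff_convex]
  have hlin : ConcaveOn ℝ univ fun u => ⟪v, u⟫ :=
    ((innerSL ℝ v : E →L[ℝ] ℝ) : E →ₗ[ℝ] ℝ).concaveOn convex_univ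
  refine ((hh.smul ht).add ((convexOn_const (‖v‖ ^ 2 / 2) convex_univ).sub hlin)).congr ?_
  intro u _
  simp only [Pi.add_apply, Pi.sub_apply, smul_eq_mul, norm_sub_sq_real, real_inner_comm v u]
  ring

theorem inner_sub_le_of_isMinOn_prox {h : E → ℝ} (hh : ConvexOn ℝ univ h) {t : ℝ} (ht : 0 ≤ t)
    {v p : E} (hp : IsMinOn (fun u => t * h u + ‖u - v‖ ^ 2 / 2) univ p) (y : E) :
    ⟪v - p, y - p⟫ ≤ t * (h y - h p) := by
  have hgrowth := (hh.strongConvexOn_prox ht v).add_sq_le_of_isMinOn hp y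
  have hexpand : ‖y - v‖ ^ 2 = ‖y - p‖ ^ 2 - 2 * ⟪v - p, y - p⟫ + ‖p - v‖ ^ 2 := by
    rw [show y - v = (y - p) - (v - p) by abel, norm_sub_sq_real, real_inner_comm, norm_sub_rev v p]
  nlinarith

section Complete

variable [CompleteSpace E]

theorem HasGradientAt.hasDerivAt_comp_add_smul {f : E → ℝ} {g x v : E} {s : ℝ}
    (hf : HasGradientAt f g (x + s • v)) :
    HasDerivAt (fun s : ℝ => f (x + s • v)) ⟪g, v⟫ s := by
  have hline : HasDerivAt (fun s : ℝ => x + s • v) v s := by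
    simpa using ((hasDerivAt_id s).smul_const v).const_add x
  have hcomp := hf.hasFDerivAt.comp_hasDerivAt s hline
  rw [InnerProductSpace.toDual_apply_apply] at hcomp
  exact hcomp

theorem StrongConvexOn.add_inner_add_le {f : E → ℝ} {m : ℝ} (hf : StrongConvexOn univ m f)
    {g x : E} (hg : HasGradientAt f g x) (y : E) :
    f x + ⟪g, y - x⟫ + m / 2 * ‖y - x‖ ^ 2 ≤ f y := by
  set v := y - x
  have hline : HasDerivAt (fun s : ℝ => x + s • v) v 0 := by
    simpa using ((hasDerivAt_id (0 : ℝ)).smul_const v).const_add x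
  have hsq : HasDerivAt (fun s : ℝ => ‖x + s • v‖ ^ 2) (2 * ⟪x, v⟫) 0 := by
    simpa using hline.norm_sq
  have hD : HasDerivAt (fun s : ℝ => f (x + s • v) - m / 2 * ‖x + s • v‖ ^ 2)
      (⟪g, v⟫ - m / 2 * (2 * ⟪x, v⟫)) 0 :=
    (HasGradientAt.hasDerivAt_comp_add_smul (by simpa using hg)).sub (hsq.const_mul (m / 2))
  have hfirst := (strongConvexOn_iff_convex.mp hf).le_sub_of_hasDerivAt_comp_add_smul hD
  have hxv : x + v = y := add_sub_cancel x y
  rw [norm_add_sq_real, hxv] at hfirst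
  linarith

theorem le_add_inner_add_of_lipschitzWith_gradient {f : E → ℝ} (hf : Differentiable ℝ f)
    {L : NNReal} (hL : LipschitzWith L (gradient f)) (x y : E) :
    f y ≤ f x + ⟪gradient f x, y - x⟫ + L / 2 * ‖y - x‖ ^ 2 := by
  set v := y - x
  set g := gradient f x
  let χ : ℝ → ℝ := fun s => f (x + s • v) - (s * ⟪g, v⟫ + L / 2 * s ^ 2 * ‖v‖ ^ 2)
  have hχ : ∀ s, HasDerivAt χ (⟪gradient f (x + s • v), v⟫ - (⟪g, v⟫ + L * s * ‖v‖ ^ 2)) s := by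
    intro s
    have hpoly : HasDerivAt (fun s : ℝ => s * ⟪g, v⟫ + L / 2 * s ^ 2 * ‖v‖ ^ 2)
        (⟪g, v⟫ + L * s * ‖v‖ ^ 2) s := by
      have := ((hasDerivAt_id s).mul_const ⟪g, v⟫).add
        (((hasDerivAt_pow 2 s).const_mul ((L : ℝ) / 2)).mul_const (‖v‖ ^ 2))
      exact this.congr_deriv (by rw [show 2 - 1 = 1 from rfl]; push_cast; ring)
    exact (hf _).hasGradientAt.hasDerivAt_comp_add_smul.sub hpoly
  have hslope : ∀ s ∈ interior (Icc (0 : ℝ) 1),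
      ⟪gradient f (x + s • v), v⟫ - (⟪g, v⟫ + L * s * ‖v‖ ^ 2) ≤ 0 := by
    intro s hs
    rw [interior_Icc] at hs
    have hlip : ‖gradient f (x + s • v) - g‖ ≤ L * (s * ‖v‖) := by
      simpa [norm_smul, abs_of_pos hs.1] using hL.norm_sub_le (x + s • v) x
    have hcs := real_inner_le_norm (gradient f (x + s • v) - g) v
    rw [inner_sub_left] at hcs
    nlinarith [norm_nonneg v]
  have hanti := antitoneOn_of_hasDerivWithinAt_nonpos (convex_Icc 0 1)
    (fun s _ => (hχ s).continuousAt.continuousWithinAt) (fun s _ => (hχ s).hasDerivWithinAt)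
    hslope (left_mem_Icc.2 zero_le_one) (right_mem_Icc.2 zero_le_one) zero_le_one
  simp only [χ, zero_smul, add_zero, one_smul, zero_mul, one_mul, mul_one, mul_zero, one_pow,
    ne_eq, OfNat.ofNat_ne_zero, not_false_eq_true, zero_pow, sub_zero] at hanti
  rw [show x + v = y from add_sub_cancel x y] at hanti
  linarith

theorem add_inner_add_le_of_isMinOn_proxGrad {f h : E → ℝ} {α t : ℝ} {L : NNReal}
    (hf : Differentiable ℝ f) (hsc : StrongConvexOn univ α f) (hL : LipschitzWith L (gradient f))
    (hh : ConvexOn ℝ univ h) (ht : 0 < t) (hLt : L * t ≤ 1) {x G : E}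
    (hp : IsMinOn (fun u => t * h u + ‖u - (x - t • gradient f x)‖ ^ 2 / 2) univ (x - t • G))
    (y : E) :
    f (x - t • G) + h (x - t • G) + ⟪G, y - x⟫ + t / 2 * ‖G‖ ^ 2 + α / 2 * ‖y - x‖ ^ 2
      ≤ f y + h y := by
  have hdesc : f (x - t • G) ≤ f x - t * ⟪gradient f x, G⟫ + t / 2 * ‖G‖ ^ 2 := by
    have hsmooth := le_add_inner_add_of_lipschitzWith_gradient hf hL x (x - t • G)
    have hLt' : L * (t ^ 2 * ‖G‖ ^ 2) ≤ t * ‖G‖ ^ 2 := by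
      nlinarith [mul_le_mul_of_nonneg_right hLt (by positivity : 0 ≤ t * ‖G‖ ^ 2)]
    rw [sub_sub_cancel_left, inner_neg_right, real_inner_smul_right, norm_neg, norm_smul,
      Real.norm_eq_abs, mul_pow, sq_abs] at hsmooth
    linarith
  have hstrong := hsc.add_inner_add_le (hf x).hasGradientAt y
  have hprox : ⟪G - gradient f x, y - x⟫ + t * ‖G‖ ^ 2 - t * ⟪gradient f x, G⟫
      ≤ h y - h (x - t • G) := by
    have hvi := inner_sub_le_of_isMinOn_prox hh ht.le hp y
    rw [show x - t • gradient f x - (x - t • G) = t • (G - gradient f x) by rw [smul_sub]; abel,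
      show y - (x - t • G) = (y - x) + t • G by abel, real_inner_smul_left, inner_add_right,
      real_inner_smul_right, inner_sub_left (𝕜 := ℝ) G (gradient f x) G,
      real_inner_self_eq_norm_sq] at hvi
    linarith [le_of_mul_le_mul_left hvi ht]
  linarith [inner_sub_left (𝕜 := ℝ) G (gradient f x) (y - x)]

end Complete

theorem coe_toNNReal_mul_le_one {β t : ℝ} (ht : 0 < t) (htβ : t ≤ 1 / β) :
    (β.toNNReal : ℝ) * t ≤ 1 := by
  have hβ : 0 < β := one_div_pos.mp (ht.trans_le htβ)
  rwa [Real.coe_toNNReal _ hβ.le, ← le_div_iff₀' hβ]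

theorem eq_pow_mul_of_forall_eq_mul {R : ℕ → ℝ} {q : ℝ} (hR : ∀ k, 1 ≤ k → R k = q * R (k - 1))
    (k : ℕ) : R k = q ^ k * R 0 := by
  induction k with
  | zero => simp
  | succ k ih => rw [hR (k + 1) (Nat.le_add_left 1 k), Nat.add_sub_cancel, ih, pow_succ]; ring

theorem B_mono {n : ℕ} (c : EuclideanSpace ℝ (Fin n)) {r r' : ℝ} (hr : r ≤ r') : B c r ⊆ B c r' :=
  fun _ hy => le_trans hy hr

theorem mem_B_sub_of_le_sub {n : ℕ} {c y : EuclideanSpace ℝ (Fin n)} {α t R r d d' : ℝ}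
    (hα : 0 < α) (hy : y ∈ B c (R - 2 / α * d)) (hd : d' ≤ d - t / 2 * r) :
    y ∈ B c (R - t / α * r - 2 / α * d') := by
  refine B_mono c ?_ hy
  have : 2 / α * (d - t / 2 * r) = 2 / α * d - t / α * r := by field_simp
  nlinarith [mul_le_mul_of_nonneg_left hd (by positivity : (0 : ℝ) ≤ 2 / α)]

theorem le_mul_of_mem_B_sub {n : ℕ} {c y : EuclideanSpace ℝ (Fin n)} {α R d : ℝ} (hα : 0 < α)
    (hy : y ∈ B c (R - 2 / α * d)) : d ≤ α / 2 * R := by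
  have hy' : ‖y - c‖ ^ 2 ≤ R - 2 / α * d := hy
  calc d = α / 2 * (2 / α * d) := by field_simp
    _ ≤ α / 2 * R := by gcongr; linarith [sq_nonneg ‖y - c‖]

theorem mem_B_of_isMinOn_proxGrad {n : ℕ} {f h : EuclideanSpace ℝ (Fin n) → ℝ} {α t : ℝ}
    {L : NNReal} (hα : 0 < α) (hf : Differentiable ℝ f) (hsc : StrongConvexOn univ α f)
    (hL : LipschitzWith L (gradient f)) (hh : ConvexOn ℝ univ h) (ht : 0 < t) (hLt : L * t ≤ 1)
    {x G : EuclideanSpace ℝ (Fin n)}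
    (hp : IsMinOn (fun u => t * h u + ‖u - (x - t • gradient f x)‖ ^ 2 / 2) univ (x - t • G))
    (y : EuclideanSpace ℝ (Fin n)) :
    y ∈ B (x - α⁻¹ • G) ((1 - α * t) * ‖G‖ ^ 2 / α ^ 2
      - 2 / α * ((f (x - t • G) + h (x - t • G)) - (f y + h y))) := by
  have hgap := add_inner_add_le_of_isMinOn_proxGrad hf hsc hL hh ht hLt hp y
  have hexpand : ‖y - (x - α⁻¹ • G)‖ ^ 2 = ‖y - x‖ ^ 2 + 2 / α * ⟪G, y - x⟫ + ‖G‖ ^ 2 / α ^ 2 := by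
    rw [show y - (x - α⁻¹ • G) = (y - x) + α⁻¹ • G by abel, norm_add_sq_real,
      real_inner_smul_right, norm_smul, Real.norm_eq_abs, abs_inv, abs_of_pos hα, real_inner_comm]
    field_simp
  show ‖y - (x - α⁻¹ • G)‖ ^ 2 ≤ _
  rw [hexpand, ← sub_nonneg]
  have hslack : (1 - α * t) * ‖G‖ ^ 2 / α ^ 2 - 2 / α * ((f (x - t • G) + h (x - t • G))
      - (f y + h y)) - (‖y - x‖ ^ 2 + 2 / α * ⟪G, y - x⟫ + ‖G‖ ^ 2 / α ^ 2)
      = 2 / α * (f y + h y - (f (x - t • G) + h (x - t • G) + ⟪G, y - x⟫ + t / 2 * ‖G‖ ^ 2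
        + α / 2 * ‖y - x‖ ^ 2)) := by
    field_simp
    ring
  rw [hslack]
  exact mul_nonneg (by positivity) (sub_nonneg.2 hgap)

/-- `P v = Prox_{th}(v)`, `xp k = (x k)⁺`, `G k = G_t(x k)`, `xpp k = (x k)^{++}`. -/
theorem stmt_13_general (n : ℕ) (α β t : ℝ) (hα : 0 < α)
    (f h : EuclideanSpace ℝ (Fin n) → ℝ)
    (hsc : ConvexOn ℝ Set.univ (fun z => f z - α / 2 * ‖z‖ ^ 2))
    (hf : Differentiable ℝ f)
    (hlip : LipschitzWith β.toNNReal (fun z => gradient f z))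
    (hconv : ConvexOn ℝ Set.univ h)
    (ht : t ∈ Set.Ioc (0 : ℝ) (1 / β))
    (xstar : EuclideanSpace ℝ (Fin n))
    (hmin : IsMinOn (fun z => f z + h z) Set.univ xstar)
    (P : EuclideanSpace ℝ (Fin n) → EuclideanSpace ℝ (Fin n))
    (hP : ∀ v, IsMinOn (fun u => t * h u + ‖u - v‖ ^ 2 / 2) Set.univ (P v))
    (x c xp G xpp : ℕ → EuclideanSpace ℝ (Fin n)) (R2 : ℕ → ℝ)
    (hxp : ∀ k, xp k = P (x k - t • gradient f (x k)))
    (hG : ∀ k, G k = t⁻¹ • (x k - xp k))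
    (hxpp : ∀ k, xpp k = x k - α⁻¹ • G k)
    (hc0 : c 0 = xpp 0)
    (hR0 : R2 0 = (1 - α * t) * ‖G 0‖ ^ 2 / α ^ 2)
    (ha : ∀ k, 1 ≤ k →
      f (xp k) + h (xp k) ≤ (f (xp (k - 1)) + h (xp (k - 1))) - t / 2 * ‖G k‖ ^ 2
        ∧ ‖xpp k - c (k - 1)‖ ^ 2 ≥ ‖G k‖ ^ 2 / α ^ 2)
    (hb1 : ∀ k, 1 ≤ k → R2 k = (1 - Real.sqrt (α * t)) * R2 (k - 1))
    (hb2 : ∀ k, 1 ≤ k → ∀ δ : ℝ, 0 ≤ δ →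
      B (c (k - 1)) (R2 (k - 1) - t / α * ‖G k‖ ^ 2 - δ)
          ∩ B (xpp k) ((1 - α * t) * ‖G k‖ ^ 2 / α ^ 2 - δ)
        ⊆ B (c k) (R2 k - δ)) :
    ∀ k : ℕ,
      xstar ∈ B (c k) (R2 k - 2 / α * ((f (xp k) + h (xp k)) - (f xstar + h xstar)))
        ∧ ‖xstar - c k‖ ^ 2 ≤ (1 - Real.sqrt (α * t)) ^ k * R2 0
        ∧ (f (xp (k + 1)) + h (xp (k + 1))) - (f xstar + h xstar)
            ≤ α / 2 * (1 - Real.sqrt (α * t)) ^ k * R2 0 := by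
  obtain ⟨ht0, htβ⟩ := ht
  have hxp' (k : ℕ) : xp k = x k - t • G k := by
    rw [hG, smul_inv_smul₀ ht0.ne', sub_sub_cancel]
  have hball (k : ℕ) : xstar ∈ B (xpp k) ((1 - α * t) * ‖G k‖ ^ 2 / α ^ 2
      - 2 / α * ((f (xp k) + h (xp k)) - (f xstar + h xstar))) := by
    rw [hxpp, hxp']
    refine mem_B_of_isMinOn_proxGrad hα hf (strongConvexOn_iff_convex.mpr hsc) hlip hconv ht0
      (coe_toNNReal_mul_le_one ht0 htβ) ?_ xstar
    rw [← hxp', hxp]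
    exact hP _
  have hgap (k : ℕ) : 0 ≤ 2 / α * ((f (xp k) + h (xp k)) - (f xstar + h xstar)) :=
    mul_nonneg (by positivity) (sub_nonneg.2 (hmin (mem_univ _)))
  have hmem (k : ℕ) : xstar ∈ B (c k)
      (R2 k - 2 / α * ((f (xp k) + h (xp k)) - (f xstar + h xstar))) := by
    induction k with
    | zero => rw [hc0, hR0]; exact hball 0
    | succ k ih =>
      have hdesc := (ha (k + 1) (Nat.le_add_left 1 k)).1
      rw [Nat.add_sub_cancel] at hdesc
      refine hb2 (k + 1) (Nat.le_add_left 1 k) _ (hgap (k + 1)) ⟨?_, hball (k + 1)⟩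
      exact mem_B_sub_of_le_sub hα ih (by linarith)
  have hR := eq_pow_mul_of_forall_eq_mul hb1
  refine fun k => ⟨hmem k, ?_, ?_⟩
  · have hk : xstar ∈ B (c k) (R2 k) := B_mono _ (sub_le_self _ (hgap k)) (hmem k)
    rwa [hR k] at hk
  · have hdesc := (ha (k + 1) (Nat.le_add_left 1 k)).1
    rw [Nat.add_sub_cancel] at hdesc
    calc f (xp (k + 1)) + h (xp (k + 1)) - (f xstar + h xstar)
        ≤ f (xp k) + h (xp k) - (f xstar + h xstar) := by nlinarith [sq_nonneg ‖G (k + 1)‖]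
      _ ≤ α / 2 * R2 k := le_mul_of_mem_B_sub hα (hmem k)
      _ = α / 2 * (1 - Real.sqrt (α * t)) ^ k * R2 0 := by rw [hR k, mul_assoc]

/-- convergence of GeoPG. Here `P v = Prox_{th}(v)`,
`xp k = (x k)⁺`, `G k = G_t(x k)`, `xpp k = (x k)^{++}`, and `F = f + h` with
minimizer `x*`. -/
theorem stmt_13 (n : ℕ) (α β t : ℝ) (hα : 0 < α) (hαβ : α ≤ β)
    (f h : EuclideanSpace ℝ (Fin n) → ℝ)
    (hsc : ConvexOn ℝ Set.univ (fun z => f z - α / 2 * ‖z‖ ^ 2))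
    (hf : Differentiable ℝ f)
    (hlip : LipschitzWith β.toNNReal (fun z => gradient f z))
    (hconv : ConvexOn ℝ Set.univ h) (hlsc : LowerSemicontinuous h)
    (ht : t ∈ Set.Ioc (0 : ℝ) (1 / β))
    (xstar : EuclideanSpace ℝ (Fin n))
    (hmin : IsMinOn (fun z => f z + h z) Set.univ xstar)
    (P : EuclideanSpace ℝ (Fin n) → EuclideanSpace ℝ (Fin n))
    (hP : ∀ v, IsMinOn (fun u => t * h u + ‖u - v‖ ^ 2 / 2) Set.univ (P v))
    (x c xp G xpp : ℕ → EuclideanSpace ℝ (Fin n)) (R2 : ℕ → ℝ)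
    (hxp : ∀ k, xp k = P (x k - t • gradient f (x k)))
    (hG : ∀ k, G k = t⁻¹ • (x k - xp k))
    (hxpp : ∀ k, xpp k = x k - α⁻¹ • G k)
    (hc0 : c 0 = xpp 0)
    (hR0 : R2 0 = (1 - α * t) * ‖G 0‖ ^ 2 / α ^ 2)
    (ha : ∀ k, 1 ≤ k →
      f (xp k) + h (xp k) ≤ (f (xp (k - 1)) + h (xp (k - 1))) - t / 2 * ‖G k‖ ^ 2
        ∧ ‖xpp k - c (k - 1)‖ ^ 2 ≥ ‖G k‖ ^ 2 / α ^ 2)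
    (hb1 : ∀ k, 1 ≤ k → R2 k = (1 - Real.sqrt (α * t)) * R2 (k - 1))
    (hb2 : ∀ k, 1 ≤ k → ∀ δ : ℝ, 0 ≤ δ →
      B (c (k - 1)) (R2 (k - 1) - t / α * ‖G k‖ ^ 2 - δ)
          ∩ B (xpp k) ((1 - α * t) * ‖G k‖ ^ 2 / α ^ 2 - δ)
        ⊆ B (c k) (R2 k - δ)) :
    ∀ k : ℕ,
      xstar ∈ B (c k) (R2 k - 2 / α * ((f (xp k) + h (xp k)) - (f xstar + h xstar)))
        ∧ ‖xstar - c k‖ ^ 2 ≤ (1 - Real.sqrt (α * t)) ^ k * R2 0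
        ∧ (f (xp (k + 1)) + h (xp (k + 1))) - (f xstar + h xstar)
            ≤ α / 2 * (1 - Real.sqrt (α * t)) ^ k * R2 0 :=
  stmt_13_general n α β t hα f h hsc hf hlip hconv ht xstar hmin P hP x c xp G xpp R2 hxp hG hxpp
    hc0 hR0 ha hb1 hb2
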